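/- arXiv:2311.00581 — 6 statements merged into one kernel-verified Lean document; each statement's English description precedes it below -/
import Mathlib

section
/- For any Kripke frame F = (W, ⊏, ≼) for the bimodal language L_pf, F is a PF-frame (i.e., all theorems of PF are valid on F) if and only if: ⊏ is transitive and conversely well-founded (there is no infinite ascending ⊏-chain), ≼ is reflexive, transitive, and upward directed (for all x, y, z, if x ≼ y and x ≼ z then there is u with y ≼ u and z ≼ u), and for all x, y, z ∈ W: (i) if x ≼ y and y ⊏ z then x ⊏ z; (ii) if x ≼ y and x ⊏ z then y ⊏ z; (iii) if x ⊏ y and y ≼ z then x ⊏ z. -/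
namespace PFPaper

/-- Formulas of the bimodal language `L_pf`, with propositional variables indexed by `ℕ`,
connectives `¬, ∧, ∨, →` and two modal operators `□p` (`boxp`) and `□f` (`boxf`). -/
inductive Formula : Type
  | var : ℕ → Formula
  | neg : Formula → Formula
  | and : Formula → Formula → Formula
  | or : Formula → Formula → Formula
  | imp : Formula → Formula → Formula
  | boxp : Formula → Formula
  | boxf : Formula → Formula
  deriving DecidableEq

/-- `◇p A := ¬□p¬A`. -/
def diap (A : Formula) : Formula := .neg (.boxp (.neg A))

/-- `◇f A := ¬□f¬A`. -/
def diaf (A : Formula) : Formula := .neg (.boxf (.neg A))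

/-- `A ↔ B` as an abbreviation: `(A → B) ∧ (B → A)`. -/
def iffF (A B : Formula) : Formula := .and (.imp A B) (.imp B A)

/-- `A` is a propositional tautology of `L_pf`: every Boolean assignment that treats
variables and boxed formulas as atoms and respects the connectives makes `A` true. -/
def Taut (A : Formula) : Prop :=
  ∀ f : Formula → Bool,
    (∀ B, f (.neg B) = !(f B)) →
    (∀ B C, f (.and B C) = (f B && f C)) →
    (∀ B C, f (.or B C) = (f B || f C)) →
    (∀ B C, f (.imp B C) = (!(f B) || f C)) →
    f A = true

/-- The bimodal logic `PF`. -/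
inductive PF : Formula → Prop
  | taut {A} : Taut A → PF A
  | kp (A B) : PF (.imp (.boxp (.imp A B)) (.imp (.boxp A) (.boxp B)))
  | lob (A) : PF (.imp (.boxp (.imp (.boxp A) A)) (.boxp A))
  | kf (A B) : PF (.imp (.boxf (.imp A B)) (.imp (.boxf A) (.boxf B)))
  | tf (A) : PF (.imp (.boxf A) A)
  | fourf (A) : PF (.imp (.boxf A) (.boxf (.boxf A)))
  | dot2f (A) : PF (.imp (diaf (.boxf A)) (.boxf (diaf A)))
  | pf1 (A) : PF (.imp (.boxp A) (.boxf (.boxp A)))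
  | pf2 (A) : PF (.imp (diap A) (.boxf (diap A)))
  | pf3 (A) : PF (.imp (.boxp A) (.boxp (.boxf A)))
  | mp {A B} : PF (.imp A B) → PF A → PF B
  | necp {A} : PF A → PF (.boxp A)
  | necf {A} : PF A → PF (.boxf A)

/-- The logic `PF^ω`: axioms are all theorems of `PF` together with all formulas
`□p A → □f A`; the sole rule is modus ponens. -/
inductive PFomega : Formula → Prop
  | ofPF {A} : PF A → PFomega A
  | reflAx (A) : PFomega (.imp (.boxp A) (.boxf A))
  | mp {A B} : PFomega (.imp A B) → PFomega A → PFomega B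

section Semantics

variable {W : Type}

/-- Kripke satisfaction on a frame `(W, R, S)` (`R` = `⊏` interprets `□p`,
`S` = `≼` interprets `□f`) with valuation `V`. -/
def Sat (R S : W → W → Prop) (V : W → ℕ → Prop) : W → Formula → Prop
  | w, .var n => V w n
  | w, .neg A => ¬ Sat R S V w A
  | w, .and A B => Sat R S V w A ∧ Sat R S V w B
  | w, .or A B => Sat R S V w A ∨ Sat R S V w B
  | w, .imp A B => Sat R S V w A → Sat R S V w B
  | w, .boxp A => ∀ v, R w v → Sat R S V v A
  | w, .boxf A => ∀ v, S w v → Sat R S V v A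

/-- `A` is valid on the frame `(W, R, S)`. -/
def ValidOn (R S : W → W → Prop) (A : Formula) : Prop :=
  ∀ (V : W → ℕ → Prop) (w : W), Sat R S V w A

/-- `(W, R, S)` is a `PF`-frame: all theorems of `PF` are valid on it. -/
def IsPFFrame (R S : W → W → Prop) : Prop :=
  ∀ A : Formula, PF A → ValidOn R S A

/-- The symmetric closure `∼` of `≼`. -/
def SymCl (S : W → W → Prop) (x y : W) : Prop := S x y ∨ S y x

/-- `∼⁺`: the transitive closure of the symmetric closure of `≼`. -/
def EqCl (S : W → W → Prop) : W → W → Prop := Relation.TransGen (SymCl S)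

/-- The cluster of `x`: its `∼⁺`-equivalence class. -/
def cluster (S : W → W → Prop) (x : W) : Set W := {y | EqCl S x y}

/-- A frame is nice iff `x ⊏ z` and `y ≼ z` imply `x ⊏ y`. -/
def Nice (R S : W → W → Prop) : Prop := ∀ x y z : W, R x z → S y z → R x y

/-- A nice `PF`-frame is rooted iff there is a `⊏`-root cluster and every cluster
has a `≼`-root element. -/
def Rooted (R S : W → W → Prop) : Prop :=
  (∃ r : W, ∀ x : W, cluster S r = cluster S x ∨ R r x) ∧
  (∀ x : W, ∃ y ∈ cluster S x, ∀ z ∈ cluster S x, S y z)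

/-- The cluster of `x`, preordered by `≼`, is a pre-Boolean algebra: its quotient by
`x ≈ y ↔ (x ≼ y ∧ y ≼ x)` forms a Boolean algebra, i.e. there is a Boolean algebra `B`
and a surjection `f` from the cluster onto `B` with `a ≼ b ↔ f a ≤ f b`. -/
def ClusterPBA (S : W → W → Prop) (x : W) : Prop :=
  ∃ (B : Type) (inst : BooleanAlgebra B) (f : cluster S x → B),
    Function.Surjective f ∧ ∀ a b : cluster S x, S a.1 b.1 ↔ inst.le (f a) (f b)

end Semantics

/-- The list of subformulas of a formula. -/
def subf : Formula → List Formula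
  | .var n => [.var n]
  | .neg A => .neg A :: subf A
  | .and A B => .and A B :: (subf A ++ subf B)
  | .or A B => .or A B :: (subf A ++ subf B)
  | .imp A B => .imp A B :: (subf A ++ subf B)
  | .boxp A => .boxp A :: subf A
  | .boxf A => .boxf A :: subf A

/-- `Φ(A) = { □p B → □f B : □p B ∈ Sub(A) }`. -/
def Phi (A : Formula) : List Formula :=
  (subf A).filterMap fun B =>
    match B with
    | .boxp C => some (.imp (.boxp C) (.boxf C))
    | _ => none

/-- Conjunction of a finite list of formulas (a fixed tautology if the list is empty). -/
def conjList : List Formula → Formula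
  | [] => .imp (.var 0) (.var 0)
  | [B] => B
  | B :: C :: t => .and B (conjList (C :: t))

/-- An injective, effective coding of formulas by natural numbers. -/
def encodeF : Formula → ℕ
  | .var n => Nat.pair 0 n
  | .neg A => Nat.pair 1 (encodeF A)
  | .and A B => Nat.pair 2 (Nat.pair (encodeF A) (encodeF B))
  | .or A B => Nat.pair 3 (Nat.pair (encodeF A) (encodeF B))
  | .imp A B => Nat.pair 4 (Nat.pair (encodeF A) (encodeF B))
  | .boxp A => Nat.pair 5 (encodeF A)
  | .boxf A => Nat.pair 6 (encodeF A)

/-- Formulas of the unimodal language `L_p` (only `□p`, written `box`). -/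
inductive LpForm : Type
  | var : ℕ → LpForm
  | neg : LpForm → LpForm
  | and : LpForm → LpForm → LpForm
  | or : LpForm → LpForm → LpForm
  | imp : LpForm → LpForm → LpForm
  | box : LpForm → LpForm
  deriving DecidableEq

/-- Propositional tautologies of `L_p`. -/
def TautLp (A : LpForm) : Prop :=
  ∀ f : LpForm → Bool,
    (∀ B, f (.neg B) = !(f B)) →
    (∀ B C, f (.and B C) = (f B && f C)) →
    (∀ B C, f (.or B C) = (f B || f C)) →
    (∀ B C, f (.imp B C) = (!(f B) || f C)) →
    f A = true

/-- The provability logic `GL` in the language `L_p`. -/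
inductive GLLogic : LpForm → Prop
  | taut {A} : TautLp A → GLLogic A
  | k (A B) : GLLogic (.imp (.box (.imp A B)) (.imp (.box A) (.box B)))
  | lob (A) : GLLogic (.imp (.box (.imp (.box A) A)) (.box A))
  | mp {A B} : GLLogic (.imp A B) → GLLogic A → GLLogic B
  | nec {A} : GLLogic A → GLLogic (.box A)

/-- Solovay's logic `S`: axioms are all theorems of `GL` and all `□p A → A`;
the sole rule is modus ponens. -/
inductive SLogic : LpForm → Prop
  | ofGL {A} : GLLogic A → SLogic A
  | reflAx (A) : SLogic (.imp (.box A) A)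
  | mp {A B} : SLogic (.imp A B) → SLogic A → SLogic B

/-- Embedding of `L_p` into `L_pf` (`box ↦ □p`). -/
def LpForm.toFormula : LpForm → Formula
  | .var n => .var n
  | .neg A => .neg A.toFormula
  | .and A B => .and A.toFormula B.toFormula
  | .or A B => .or A.toFormula B.toFormula
  | .imp A B => .imp A.toFormula B.toFormula
  | .box A => .boxp A.toFormula

/-- The fusion `GL⊗Triv` in the language `L_pf`: the `GL`-axioms for `□p`,
the axiom `A ↔ □f A`, with modus ponens and necessitation for `□p`. -/
inductive GLTriv : Formula → Prop
  | taut {A} : Taut A → GLTriv A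
  | kp (A B) : GLTriv (.imp (.boxp (.imp A B)) (.imp (.boxp A) (.boxp B)))
  | lob (A) : GLTriv (.imp (.boxp (.imp (.boxp A) A)) (.boxp A))
  | triv (A) : GLTriv (iffF A (.boxf A))
  | mp {A B} : GLTriv (.imp A B) → GLTriv A → GLTriv B
  | necp {A} : GLTriv A → GLTriv (.boxp A)

/-- Formulas of the unimodal language `L_f` (only `□f`, written `box`). -/
inductive LfForm : Type
  | var : ℕ → LfForm
  | neg : LfForm → LfForm
  | and : LfForm → LfForm → LfForm
  | or : LfForm → LfForm → LfForm
  | imp : LfForm → LfForm → LfForm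
  | box : LfForm → LfForm
  deriving DecidableEq

/-- `◇f A := ¬□f¬A` in `L_f`. -/
def LfForm.dia (A : LfForm) : LfForm := .neg (.box (.neg A))

/-- Propositional tautologies of `L_f`. -/
def TautLf (A : LfForm) : Prop :=
  ∀ f : LfForm → Bool,
    (∀ B, f (.neg B) = !(f B)) →
    (∀ B C, f (.and B C) = (f B && f C)) →
    (∀ B C, f (.or B C) = (f B || f C)) →
    (∀ B C, f (.imp B C) = (!(f B) || f C)) →
    f A = true

/-- The modal logic `S4.2` in the language `L_f`. -/
inductive S42 : LfForm → Prop
  | taut {A} : TautLf A → S42 A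
  | k (A B) : S42 (.imp (.box (.imp A B)) (.imp (.box A) (.box B)))
  | t (A) : S42 (.imp (.box A) A)
  | four (A) : S42 (.imp (.box A) (.box (.box A)))
  | dot2 (A) : S42 (.imp (LfForm.dia (.box A)) (.box (LfForm.dia A)))
  | mp {A B} : S42 (.imp A B) → S42 A → S42 B
  | nec {A} : S42 A → S42 (.box A)

/-- Embedding of `L_f` into `L_pf` (`box ↦ □f`). -/
def LfForm.toFormula : LfForm → Formula
  | .var n => .var n
  | .neg A => .neg A.toFormula
  | .and A B => .and A.toFormula B.toFormula
  | .or A B => .or A.toFormula B.toFormula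
  | .imp A B => .imp A.toFormula B.toFormula
  | .box A => .boxf A.toFormula

/-- `L_pf`-formulas with no occurrence of `□p`, i.e. `L_f`-formulas. -/
inductive NoBoxp : Formula → Prop
  | var (n) : NoBoxp (.var n)
  | neg {A} : NoBoxp A → NoBoxp (.neg A)
  | and {A B} : NoBoxp A → NoBoxp B → NoBoxp (.and A B)
  | or {A B} : NoBoxp A → NoBoxp B → NoBoxp (.or A B)
  | imp {A B} : NoBoxp A → NoBoxp B → NoBoxp (.imp A B)
  | boxf {A} : NoBoxp A → NoBoxp (.boxf A)

/-- Clauses of `□p`-CNF: disjunctions `□p D_0 ∨ ⋯ ∨ □p D_{k-1} ∨ ◇p E ∨ F`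
with `F` an `L_f`-formula (each of the three parts may be absent). -/
inductive IsClause : Formula → Prop
  | lf {F} : NoBoxp F → IsClause F
  | dia (E : Formula) : IsClause (diap E)
  | diaOr (E : Formula) {F} : NoBoxp F → IsClause (.or (diap E) F)
  | boxAlone (D : Formula) : IsClause (.boxp D)
  | boxOr (D : Formula) {C} : IsClause C → IsClause (.or (.boxp D) C)

/-- A formula in `□p`-conjunctive normal form: a conjunction of clauses. -/
inductive IsCNF : Formula → Prop
  | clause {C} : IsClause C → IsCNF C
  | and {A B} : IsCNF A → IsCNF B → IsCNF (.and A B)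

/-- The `□p`-modal degree of a formula. -/
def deg : Formula → ℕ
  | .var _ => 0
  | .neg A => deg A
  | .and A B => max (deg A) (deg B)
  | .or A B => max (deg A) (deg B)
  | .imp A B => max (deg A) (deg B)
  | .boxf A => deg A
  | .boxp A => deg A + 1

section Aux

variable {W : Type} {R S : W → W → Prop}

lemma wf_of_no_chain
    (h : ¬ ∃ f : ℕ → W, ∀ n : ℕ, R (f n) (f (n + 1))) :
    WellFounded (fun a b => R b a) := by
  classical
  by_contra hwf
  apply h
  have hex : ∃ x, ¬ Acc (fun a b => R b a) x := by
    by_contra hx; push_neg at hx; exact hwf ⟨hx⟩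
  obtain ⟨x0, hx0⟩ := hex
  have step : ∀ x, ¬ Acc (fun a b => R b a) x →
      ∃ y, R x y ∧ ¬ Acc (fun a b => R b a) y := by
    intro x hx
    by_contra hy; push_neg at hy
    exact hx (Acc.intro x (fun y hxy => hy y hxy))
  let T := {x : W // ¬ Acc (fun a b => R b a) x}
  let g : T → T := fun p => ⟨(step p.1 p.2).choose, (step p.1 p.2).choose_spec.2⟩
  have hg : ∀ p : T, R p.1 (g p).1 := fun p => (step p.1 p.2).choose_spec.1
  refine ⟨fun n => (g^[n] ⟨x0, hx0⟩).1, fun n => ?_⟩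
  have hgi := hg (g^[n] ⟨x0, hx0⟩)
  simpa [Function.iterate_succ_apply'] using hgi

lemma taut_sound {A : Formula} (h : Taut A) : ValidOn R S A := by
  intro V w
  classical
  have := h (fun B => if Sat R S V w B then true else false)
    (by intro B; by_cases hB : Sat R S V w B <;> simp [Sat, hB])
    (by intro B C
        by_cases hB : Sat R S V w B <;> by_cases hC : Sat R S V w C <;>
          simp [Sat, hB, hC])
    (by intro B C
        by_cases hB : Sat R S V w B <;> by_cases hC : Sat R S V w C <;>
          simp [Sat, hB, hC])
    (by intro B C
        by_cases hB : Sat R S V w B <;> by_cases hC : Sat R S V w C <;>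
          simp [Sat, hB, hC])
  by_contra hA
  simp [hA] at this

lemma lob_valid (htrans : Transitive R)
    (hwf : WellFounded (fun a b : W => R b a)) (A : Formula) :
    ValidOn R S (.imp (.boxp (.imp (.boxp A) A)) (.boxp A)) := by
  intro V w
  simp only [Sat]
  intro h
  intro v
  induction v using WellFounded.induction hwf with
  | _ v ih =>
    intro hv
    exact h v hv (fun u hu => ih u hu (htrans hv hu))

lemma pf_sound
    (hRtrans : Transitive R)
    (hnochain : ¬ ∃ f : ℕ → W, ∀ n : ℕ, R (f n) (f (n + 1)))
    (hSrefl : Reflexive S) (hStrans : Transitive S)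
    (hdir : ∀ x y z : W, S x y → S x z → ∃ u : W, S y u ∧ S z u)
    (h1 : ∀ x y z : W, S x y → R y z → R x z)
    (h2 : ∀ x y z : W, S x y → R x z → R y z)
    (h3 : ∀ x y z : W, R x y → S y z → R x z) :
    IsPFFrame R S := by
  have hwf := wf_of_no_chain hnochain
  intro A hA
  induction hA with
  | taut h => exact taut_sound h
  | kp A B =>
      intro V w
      simp only [Sat]
      intro hAB hA v hv
      exact hAB v hv (hA v hv)
  | lob A => exact lob_valid hRtrans hwf A
  | kf A B =>
      intro V w
      simp only [Sat]
      intro hAB hA v hv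
      exact hAB v hv (hA v hv)
  | tf A =>
      intro V w
      simp only [Sat]
      intro h
      exact h w (hSrefl w)
  | fourf A =>
      intro V w
      simp only [Sat]
      intro h v hv u hu
      exact h u (hStrans hv hu)
  | dot2f A =>
      intro V w
      simp only [diaf, Sat]
      intro h v hv hcon
      apply h
      intro u hu hbox
      obtain ⟨t, htv, htu⟩ := hdir w v u hv hu
      exact hcon t htv (hbox t htu)
  | pf1 A =>
      intro V w
      simp only [Sat]
      intro h v hv u hu
      exact h u (h1 w v u hv hu)
  | pf2 A =>
      intro V w
      simp only [diap, Sat]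
      intro h v hv hcon
      apply h
      intro u hu
      exact hcon u (h2 w v u hv hu)
  | pf3 A =>
      intro V w
      simp only [Sat]
      intro h v hv u hu
      exact h u (h3 w v u hv hu)
  | mp hAB hA ihAB ihA =>
      intro V w
      exact ihAB V w (ihA V w)
  | necp hA ihA =>
      intro V w
      simp only [Sat]
      intro v _
      exact ihA V v
  | necf hA ihA =>
      intro V w
      simp only [Sat]
      intro v _
      exact ihA V v

end Aux

theorem statement_3 (W : Type) (hW : Nonempty W) (R S : W → W → Prop) :
    IsPFFrame R S ↔
      (Transitive R ∧
       (¬ ∃ f : ℕ → W, ∀ n : ℕ, R (f n) (f (n + 1))) ∧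
       Reflexive S ∧ Transitive S ∧
       (∀ x y z : W, S x y → S x z → ∃ u : W, S y u ∧ S z u) ∧
       (∀ x y z : W, S x y → R y z → R x z) ∧
       (∀ x y z : W, S x y → R x z → R y z) ∧
       (∀ x y z : W, R x y → S y z → R x z)) := by
  constructor
  · intro hF
    refine ⟨?_, ?_, ?_, ?_, ?_, ?_, ?_, ?_⟩
    · -- transitivity of R, from Löb
      intro a b c hab hbc
      have := hF _ (PF.lob (.var 0))
        (fun w _ => R a w ∧ ∀ y, R w y → R a y) a
      simp only [Sat] at this
      have hb := this (fun x hx hbx => ⟨hx, fun y hy => (hbx y hy).1⟩) b hab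
      exact hb.2 c hbc
    · -- converse well-foundedness of R, from Löb
      rintro ⟨f, hf⟩
      have := hF _ (PF.lob (.var 0)) (fun w _ => ∀ n, w ≠ f n) (f 0)
      simp only [Sat] at this
      have hprem : ∀ x, R (f 0) x → (∀ y, R x y → ∀ n, y ≠ f n) →
          ∀ n, x ≠ f n := by
        intro x _ hbx n he
        exact hbx (f (n + 1)) (he ▸ hf n) (n + 1) rfl
      exact this hprem (f 1) (hf 0) 1 rfl
    · -- reflexivity of S
      intro x
      have := hF _ (PF.tf (.var 0)) (fun w _ => S x w) x
      simp only [Sat] at this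
      exact this (fun v hv => hv)
    · -- transitivity of S
      intro x y z hxy hyz
      have := hF _ (PF.fourf (.var 0)) (fun w _ => S x w) x
      simp only [Sat] at this
      exact this (fun v hv => hv) y hxy z hyz
    · -- directedness of S
      intro x y z hxy hxz
      have := hF _ (PF.dot2f (.var 0)) (fun w _ => S y w) x
      simp only [diaf, Sat] at this
      have hcon := this (fun hall => hall y hxy (fun u hu => hu)) z hxz
      by_contra hno
      push_neg at hno
      exact hcon (fun u hu hyu => hno u hyu hu)
    · -- condition (i)
      intro x y z hxy hyz
      have := hF _ (PF.pf1 (.var 0)) (fun w _ => R x w) x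
      simp only [Sat] at this
      exact this (fun v hv => hv) y hxy z hyz
    · -- condition (ii)
      intro x y z hxy hxz
      have := hF _ (PF.pf2 (.var 0)) (fun w _ => w = z) x
      simp only [diap, Sat] at this
      have hcon := this (fun hall => hall z hxz rfl) y hxy
      by_contra hno
      exact hcon (fun u hu he => hno (he ▸ hu))
    · -- condition (iii)
      intro x y z hxy hyz
      have := hF _ (PF.pf3 (.var 0)) (fun w _ => R x w) x
      simp only [Sat] at this
      exact this (fun v hv => hv) y hxy z hyz
  · rintro ⟨h1, h2, h3, h4, h5, h6, h7, h8⟩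
    exact pf_sound h1 h2 h3 h4 h5 h6 h7 h8

end PFPaper
end

section
/- Let F = (W, ⊏, ≼) be any PF-frame and x, y, z ∈ W. If x ∼⁺ y and x ⊏ z, then y ⊏ z, where ∼⁺ is the transitive closure of the symmetric closure of ≼. -/
namespace PFPaper

/-- Frame correspondence for `pf2`: if `S x y` and `R x z` then `R y z`. -/
theorem step_fwd {W : Type} {R S : W → W → Prop} (hF : IsPFFrame R S)
    {x y z : W} (hxy : S x y) (hxz : R x z) : R y z := by
  have h := hF _ (PF.pf2 (.var 0)) (fun w _ => w = z) x
  simp only [Sat, diap] at h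
  have h1 : ¬ ∀ v, R x v → ¬ (v = z) := fun h' => h' z hxz rfl
  have h2 := h h1 y hxy
  by_contra hc
  exact h2 (fun v hv hvz => hc (hvz ▸ hv))

/-- Frame correspondence for `pf1`: if `S y x` and `R x z` then `R y z`. -/
theorem step_bwd {W : Type} {R S : W → W → Prop} (hF : IsPFFrame R S)
    {x y z : W} (hyx : S y x) (hxz : R x z) : R y z := by
  have h := hF _ (PF.pf1 (.var 0)) (fun w _ => R y w) y
  simp only [Sat] at h
  exact h (fun v hv => hv) x hyx z hxz

theorem statement_4 (W : Type) (hW : Nonempty W) (R S : W → W → Prop)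
    (hF : IsPFFrame R S) (x y z : W) (hxy : EqCl S x y) (hxz : R x z) :
    R y z := by
  induction hxy with
  | single hb => exact hb.elim (fun h => step_fwd hF h hxz) (fun h => step_bwd hF h hxz)
  | tail _ hbc ih => exact hbc.elim (fun h => step_fwd hF h ih) (fun h => step_bwd hF h ih)

end PFPaper
end

section
/- Let F = (W, ⊏, ≼) be any PF-frame and x, y ∈ W. If x ∼⁺ y, then it is not the case that x ⊏ y, where ∼⁺ is the transitive closure of the symmetric closure of ≼. -/
namespace PFPaper

theorem statement_5 (W : Type) (hW : Nonempty W) (R S : W → W → Prop)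
    (hF : IsPFFrame R S) (x y : W) (hxy : EqCl S x y) :
    ¬ R x y := by
  -- From axiom pf1: S a b → R b z → R a z
  have cond1 : ∀ a b z : W, S a b → R b z → R a z := by
    intro a b z hS hR
    have h := hF _ (PF.pf1 (.var 0)) (fun w _ => R a w) a
    simp only [Sat] at h
    exact h (fun v hv => hv) b hS z hR
  -- From axiom pf2: S a b → R a z → R b z
  have cond2 : ∀ a b z : W, S a b → R a z → R b z := by
    intro a b z hS hR
    have h := hF _ (PF.pf2 (.var 0)) (fun w _ => w = z) a
    simp only [Sat, diap] at h
    have h1 : ¬ ¬ ∃ u, R a u ∧ u = z := not_not.mpr ⟨z, hR, rfl⟩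
    have h2 := h (by push_neg; exact ⟨z, hR, rfl⟩) b hS
    push_neg at h2
    obtain ⟨u, hu, rfl⟩ := h2
    exact hu
  -- From Löb: irreflexivity
  have irrefl : ∀ a : W, ¬ R a a := by
    intro a hRa
    have h := hF _ (PF.lob (.var 0)) (fun w _ => w ≠ a) a
    simp only [Sat] at h
    have := h (by
      intro v hv hbox
      intro hva
      rw [hva] at hbox
      exact hbox a hRa rfl) a hRa
    exact this rfl
  -- SymCl step preserves first coordinate of R
  have step : ∀ a b z : W, SymCl S a b → (R a z ↔ R b z) := by
    intro a b z hab
    rcases hab with h | h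
    · exact ⟨cond2 a b z h, cond1 a b z h⟩
    · exact ⟨cond1 b a z h, cond2 b a z h⟩
  intro hRxy
  have : R y y := by
    have key : ∀ b, EqCl S x b → R b y := by
      intro b hb
      induction hb with
      | single h => exact (step _ _ y h).mp hRxy
      | tail _ h ih => exact (step _ _ y h).mp ih
    exact key y hxy
  exact irrefl y this

end PFPaper
end

section
/- Let F = (W, ⊏, ≼) be any nice PF-frame and x, y, z, w ∈ W. If x ∼⁺ y, z ∼⁺ w, and x ⊏ z, then y ⊏ w, where ∼⁺ is the transitive closure of the symmetric closure of ≼. -/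
namespace PFPaper

theorem frame_pf1 {W : Type} {R S : W → W → Prop} (hF : IsPFFrame R S)
    {x y z : W} (h1 : S x y) (h2 : R y z) : R x z := by
  have := hF _ (PF.pf1 (.var 0)) (fun u _ => R x u) x
  simp only [Sat] at this
  exact this (fun v hv => hv) y h1 z h2

theorem frame_pf2 {W : Type} {R S : W → W → Prop} (hF : IsPFFrame R S)
    {x y v : W} (h1 : S x y) (h2 : R x v) : R y v := by
  have := hF _ (PF.pf2 (.var 0)) (fun u _ => u = v) x
  simp only [diap, Sat] at this
  have hprem : ¬ ∀ u, R x u → ¬ (u = v) := fun h => h v h2 rfl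
  have := this hprem y h1
  by_contra hc
  exact this (fun u hu hev => hc (hev ▸ hu))

theorem frame_pf3 {W : Type} {R S : W → W → Prop} (hF : IsPFFrame R S)
    {x z w : W} (h1 : R x z) (h2 : S z w) : R x w := by
  have := hF _ (PF.pf3 (.var 0)) (fun u _ => R x u) x
  simp only [Sat] at this
  exact this (fun v hv => hv) z h1 w h2

theorem statement_6 (W : Type) (hW : Nonempty W) (R S : W → W → Prop)
    (hF : IsPFFrame R S) (hN : Nice R S) (x y z w : W)
    (hxy : EqCl S x y) (hzw : EqCl S z w) (hxz : R x z) :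
    R y w := by
  have hleft : ∀ {a b v : W}, SymCl S a b → R a v → R b v := by
    rintro a b v (h | h) hr
    · exact frame_pf2 hF h hr
    · exact frame_pf1 hF h hr
  have hright : ∀ {a c d : W}, SymCl S c d → R a c → R a d := by
    rintro a c d (h | h) hr
    · exact frame_pf3 hF hr h
    · exact hN a d c hr h
  have hyz : R y z := by
    induction hxy with
    | single h => exact hleft h hxz
    | tail _ h ih => exact hleft h ih
  induction hzw with
  | single h => exact hright h hyz
  | tail _ h ih => exact hright h ih

end PFPaper
end

section
/- For any formula A of the bimodal language L_pf, the following are equivalent: (1) A is a theorem of PF; (2) A is valid on all PF-frames; (3) A is valid on all finite rooted nice PBA PF-frames; (4) for every Kripke model based on a finite rooted nice PBA PF-frame, A is true at every ≼-root element of the ⊏-root cluster. -/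
namespace PFPaper

/-!
Soundness is immediate, since `IsPFFrame` quantifies over the theorems of `PF`. For completeness,
extend `¬A` to a maximal consistent set `x₀` and build a finite countermodel from the subformulas
of `A`. Its clusters are the nodes of a finite tree: a child of a node is a Löb witness for some
`□p B ∉ u` with `u` `≼`-above the node's base, and every step adds a new `□p`-subformula to the
base, which bounds the depth. The worlds of a cluster are the subsets `a` of the finitely many
types realized `≼`-above its base, ordered by inclusion, so that each cluster is a powerset
Boolean algebra; a world carries the type of the top of `a` when `a` is a chain, and a top type
(which exists by axiom `.2`) otherwise. Axioms `pf1`, `pf2` make `□p`-formulas constant along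
`≼`, and `pf3` passes `□p C` down the tree as `□f C`; this is what the truth lemma needs.
-/

/-! ### Derivations and maximal consistent sets -/

def Formula.bot : Formula := .neg (.imp (.var 0) (.var 0))

namespace PF

theorem imp_self (A : Formula) : PF (.imp A A) :=
  .taut fun f _ _ _ hi => by simp only [hi]; grind

theorem imp_const (A B : Formula) : PF (.imp A (.imp B A)) :=
  .taut fun f _ _ _ hi => by simp only [hi]; grind

theorem imp_distrib (A B C : Formula) :
    PF (.imp (.imp A (.imp B C)) (.imp (.imp A B) (.imp A C))) :=
  .taut fun f _ _ _ hi => by simp only [hi]; grind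

theorem imp_and_imp (A B C D : Formula) :
    PF (.imp (.imp A (.imp B C)) (.imp (.imp D B) (.imp (.and A D) C))) :=
  .taut fun f _ ha _ hi => by simp only [ha, hi]; grind

theorem and_intro (A B : Formula) : PF (.imp A (.imp B (.and A B))) :=
  .taut fun f _ ha _ hi => by simp only [ha, hi]; grind

theorem and_left (A B : Formula) : PF (.imp (.and A B) A) :=
  .taut fun f _ ha _ hi => by simp only [ha, hi]; grind

theorem and_right (A B : Formula) : PF (.imp (.and A B) B) :=
  .taut fun f _ ha _ hi => by simp only [ha, hi]; grind

theorem or_inl (A B : Formula) : PF (.imp A (.or A B)) :=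
  .taut fun f _ _ ho hi => by simp only [ho, hi]; grind

theorem or_inr (A B : Formula) : PF (.imp B (.or A B)) :=
  .taut fun f _ _ ho hi => by simp only [ho, hi]; grind

theorem or_resolve (A B : Formula) : PF (.imp (.or A B) (.imp (.neg A) B)) :=
  .taut fun f hn _ ho hi => by simp only [hn, ho, hi]; grind

theorem neg_imp (A B : Formula) : PF (.imp (.neg A) (.imp A B)) :=
  .taut fun f hn _ _ hi => by simp only [hn, hi]; grind

theorem of_neg_imp_bot (A : Formula) : PF (.imp (.imp (.neg A) Formula.bot) A) :=
  .taut fun f hn _ _ hi => by simp only [Formula.bot, hn, hi]; grind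

theorem not_imp_bot (A : Formula) : PF (.imp A (.neg (.imp A Formula.bot))) :=
  .taut fun f hn _ _ hi => by simp only [Formula.bot, hn, hi]; grind

theorem imp_neg_imp_bot (A : Formula) : PF (.imp A (.imp (.neg A) Formula.bot)) :=
  .taut fun f hn _ _ hi => by simp only [Formula.bot, hn, hi]; grind

theorem not_not_intro (A : Formula) : PF (.imp A (.neg (.neg A))) :=
  .taut fun f hn _ _ hi => by simp only [hn, hi]; grind

theorem not_not_elim (A : Formula) : PF (.imp (.neg (.neg A)) A) :=
  .taut fun f hn _ _ hi => by simp only [hn, hi]; grind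

theorem imp_trans {A B C : Formula} (h₁ : PF (.imp A B)) (h₂ : PF (.imp B C)) :
    PF (.imp A C) :=
  .mp (.mp (.taut fun f _ _ _ hi => by simp only [hi]; grind) h₁) h₂

theorem boxp_mono {A B : Formula} (h : PF (.imp A B)) : PF (.imp (.boxp A) (.boxp B)) :=
  .mp (.kp A B) (.necp h)

theorem boxf_mono {A B : Formula} (h : PF (.imp A B)) : PF (.imp (.boxf A) (.boxf B)) :=
  .mp (.kf A B) (.necf h)

/-- Derived from Löb's axiom applied to `A ∧ □p A`. -/
theorem boxp_four (A : Formula) : PF (.imp (.boxp A) (.boxp (.boxp A))) := by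
  have hX : PF (.imp A (.imp (.boxp (.and A (.boxp A))) (.and A (.boxp A)))) :=
    .mp (.taut fun f _ ha _ hi => by simp only [ha, hi]; grind)
      (boxp_mono (and_left A (.boxp A)))
  exact imp_trans (imp_trans (boxp_mono hX) (.lob _)) (boxp_mono (and_right A (.boxp A)))

end PF

inductive Derivable (Γ : Set Formula) : Formula → Prop
  | hyp {B} : B ∈ Γ → Derivable Γ B
  | thm {B} : PF B → Derivable Γ B
  | mp {A B} : Derivable Γ (.imp A B) → Derivable Γ A → Derivable Γ B

namespace Derivable

variable {Γ Δ : Set Formula} {A B : Formula}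

theorem mp_thm (h : PF (.imp A B)) (hA : Derivable Γ A) : Derivable Γ B := .mp (.thm h) hA

theorem mono (h : Γ ⊆ Δ) (hB : Derivable Γ B) : Derivable Δ B := by
  induction hB with
  | hyp hB => exact .hyp (h hB)
  | thm hB => exact .thm hB
  | mp _ _ ih₁ ih₂ => exact .mp ih₁ ih₂

theorem imp_intro (h : Derivable (insert A Γ) B) : Derivable Γ (.imp A B) := by
  induction h with
  | hyp hB =>
    rcases hB with rfl | hB
    · exact .thm (PF.imp_self _)
    · exact mp_thm (PF.imp_const _ _) (.hyp hB)
  | thm hB => exact mp_thm (PF.imp_const _ _) (.thm hB)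
  | mp _ _ ih₁ ih₂ => exact .mp (mp_thm (PF.imp_distrib _ _ _) ih₁) ih₂

theorem of_inconsistent_insert_neg (h : Derivable (insert (.neg B) Γ) Formula.bot) :
    Derivable Γ B :=
  mp_thm (PF.of_neg_imp_bot B) (imp_intro h)

theorem boxf_image (h : Derivable Γ B) : Derivable (Formula.boxf '' Γ) (.boxf B) := by
  induction h with
  | hyp hB => exact .hyp (Set.mem_image_of_mem _ hB)
  | thm hB => exact .thm (.necf hB)
  | mp _ _ ih₁ ih₂ => exact .mp (mp_thm (.kf _ _) ih₁) ih₂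

theorem boxp_image (h : Derivable Γ B) : Derivable (Formula.boxp '' Γ) (.boxp B) := by
  induction h with
  | hyp hB => exact .hyp (Set.mem_image_of_mem _ hB)
  | thm hB => exact .thm (.necp hB)
  | mp _ _ ih₁ ih₂ => exact .mp (mp_thm (.kp _ _) ih₁) ih₂

theorem exists_finite (h : Derivable Γ B) : ∃ s ⊆ Γ, s.Finite ∧ Derivable s B := by
  induction h with
  | @hyp B hB => exact ⟨{B}, by simpa using hB, Set.finite_singleton B, .hyp rfl⟩
  | thm hB => exact ⟨∅, Set.empty_subset _, Set.finite_empty, .thm hB⟩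
  | mp _ _ ih₁ ih₂ =>
    obtain ⟨s, hsΓ, hs, h₁⟩ := ih₁
    obtain ⟨t, htΓ, ht, h₂⟩ := ih₂
    exact ⟨s ∪ t, Set.union_subset hsΓ htΓ, hs.union ht,
      .mp (h₁.mono Set.subset_union_left) (h₂.mono Set.subset_union_right)⟩

theorem exists_of_union (h : Derivable (Γ ∪ Δ) B) :
    ∃ D, Derivable Γ (.imp D B) ∧ Derivable Δ D := by
  induction h with
  | @hyp B hB =>
    rcases hB with hB | hB
    · exact ⟨.imp B B, mp_thm (PF.imp_const _ _) (.hyp hB), .thm (PF.imp_self B)⟩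
    · exact ⟨B, .thm (PF.imp_self B), .hyp hB⟩
  | @thm B hB => exact ⟨.imp B B, mp_thm (PF.imp_const _ _) (.thm hB), .thm (PF.imp_self B)⟩
  | mp _ _ ih₁ ih₂ =>
    obtain ⟨D₁, hΓ₁, hΔ₁⟩ := ih₁
    obtain ⟨D₂, hΓ₂, hΔ₂⟩ := ih₂
    exact ⟨.and D₁ D₂, .mp (mp_thm (PF.imp_and_imp _ _ _ _) hΓ₁) hΓ₂,
      .mp (mp_thm (PF.and_intro _ _) hΔ₁) hΔ₂⟩

theorem pf_of_empty (h : Derivable ∅ B) : PF B := by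
  induction h with
  | hyp hB => exact absurd hB (Set.notMem_empty _)
  | thm hB => exact hB
  | mp _ _ ih₁ ih₂ => exact .mp ih₁ ih₂

end Derivable

def Consistent (Γ : Set Formula) : Prop := ¬ Derivable Γ Formula.bot

def MaxConsistent (Γ : Set Formula) : Prop := Consistent Γ ∧ ∀ B, B ∈ Γ ∨ .neg B ∈ Γ

theorem exists_maxConsistent_superset {Γ : Set Formula} (h : Consistent Γ) :
    ∃ Δ, Γ ⊆ Δ ∧ MaxConsistent Δ := by
  obtain ⟨Δ, hΓΔ, hmax⟩ := zorn_subset_nonempty {Δ | Consistent Δ} (fun c hc hchain hne => by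
    refine ⟨⋃₀ c, fun hder => ?_, fun s hs => Set.subset_sUnion_of_mem hs⟩
    obtain ⟨s, hsc, hs, hders⟩ := hder.exists_finite
    obtain ⟨t, htc, hst⟩ :=
      hchain.directedOn.exists_mem_subset_of_finite_of_subset_sUnion hne hs hsc
    exact hc htc (hders.mono hst)) Γ h
  refine ⟨Δ, hΓΔ, hmax.prop, fun B => or_iff_not_imp_left.2 fun hB => ?_⟩
  by_contra hnB
  have hinc : ∀ C ∉ Δ, Derivable (insert C Δ) Formula.bot := fun C hC => by
    by_contra hcon
    exact hC (hmax.mem_of_prop_insert hcon)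
  exact hmax.prop (.mp (Derivable.imp_intro (hinc B hB))
    (Derivable.of_inconsistent_insert_neg (hinc _ hnB)))

namespace MaxConsistent

variable {x : Set Formula} (hx : MaxConsistent x) {A B : Formula}
include hx

theorem mem_of_derivable {Γ : Set Formula} (hΓ : Γ ⊆ x) (h : Derivable Γ B) : B ∈ x :=
  (hx.2 B).resolve_right fun hnB =>
    hx.1 (.mp (.mp (.thm (PF.imp_neg_imp_bot B)) (h.mono hΓ)) (.hyp hnB))

theorem mem_of_pf_imp (h : PF (.imp A B)) (hA : A ∈ x) : B ∈ x :=
  hx.mem_of_derivable subset_rfl (.mp_thm h (.hyp hA))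

theorem mem_of_pf_imp_imp {C : Formula} (h : PF (.imp A (.imp B C))) (hA : A ∈ x) (hB : B ∈ x) :
    C ∈ x :=
  hx.mem_of_derivable subset_rfl (.mp (.mp_thm h (.hyp hA)) (.hyp hB))

theorem neg_mem_iff : .neg B ∈ x ↔ B ∉ x :=
  ⟨fun hnB hB => hx.1 (.mp (.mp (.thm (PF.imp_neg_imp_bot B)) (.hyp hB)) (.hyp hnB)),
    (hx.2 B).resolve_left⟩

theorem imp_mem_iff : .imp A B ∈ x ↔ (A ∈ x → B ∈ x) := by
  refine ⟨fun h hA => hx.mem_of_pf_imp_imp (PF.imp_self _) h hA, fun h => ?_⟩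
  by_cases hA : A ∈ x
  · exact hx.mem_of_pf_imp (PF.imp_const B A) (h hA)
  · exact hx.mem_of_pf_imp (PF.neg_imp A B) ((hx.neg_mem_iff).2 hA)

theorem and_mem_iff : .and A B ∈ x ↔ (A ∈ x ∧ B ∈ x) :=
  ⟨fun h => ⟨hx.mem_of_pf_imp (PF.and_left A B) h, hx.mem_of_pf_imp (PF.and_right A B) h⟩,
    fun h => hx.mem_of_pf_imp_imp (PF.and_intro A B) h.1 h.2⟩

theorem or_mem_iff : .or A B ∈ x ↔ (A ∈ x ∨ B ∈ x) := by
  refine ⟨fun h => or_iff_not_imp_left.2 fun hA => ?_, ?_⟩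
  · exact hx.mem_of_pf_imp_imp (PF.or_resolve A B) h ((hx.neg_mem_iff).2 hA)
  · rintro (hA | hB)
    · exact hx.mem_of_pf_imp (PF.or_inl A B) hA
    · exact hx.mem_of_pf_imp (PF.or_inr A B) hB

theorem boxf_mem_of_derivable (h : Derivable {C | .boxf C ∈ x} B) : .boxf B ∈ x :=
  hx.mem_of_derivable (by rintro _ ⟨C, hC, rfl⟩; exact hC) h.boxf_image

end MaxConsistent

/-! ### The canonical relations -/

def CanonF (x y : Set Formula) : Prop := ∀ B, .boxf B ∈ x → B ∈ y

def CanonP (x y : Set Formula) : Prop := ∀ B, .boxp B ∈ x → B ∈ y ∧ .boxp B ∈ y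

namespace MaxConsistent

variable {x y z : Set Formula} (hx : MaxConsistent x) {B : Formula}
include hx

theorem canonF_refl : CanonF x x := fun B hB => hx.mem_of_pf_imp (.tf B) hB

theorem boxf_mem_of_canonF (h : CanonF x y) (hB : .boxf B ∈ x) : .boxf B ∈ y :=
  h _ (hx.mem_of_pf_imp (.fourf B) hB)

theorem canonF_trans (h₁ : CanonF x y) (h₂ : CanonF y z) : CanonF x z :=
  fun B hB => h₂ B (hx.boxf_mem_of_canonF h₁ hB)

theorem diaf_mem_of_canonF (hy : MaxConsistent y) (h : CanonF x y) (hB : B ∈ y) :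
    diaf B ∈ x := by
  by_contra hn
  have hbox : .boxf (.neg B) ∈ x := by
    by_contra h'
    exact hn ((hx.neg_mem_iff).2 h')
  exact (hy.neg_mem_iff).1 (h _ hbox) hB

/-- Axiom `pf1` gives one direction, `pf2` the other. -/
theorem boxp_mem_iff_of_canonF (hy : MaxConsistent y) (h : CanonF x y) :
    .boxp B ∈ x ↔ .boxp B ∈ y := by
  refine ⟨fun hB => h _ (hx.mem_of_pf_imp (.pf1 B) hB), fun hB => ?_⟩
  by_contra hnB
  have hdia : diap (.neg B) ∈ x := (hx.neg_mem_iff).2 fun hB' =>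
    hnB (hx.mem_of_pf_imp (PF.boxp_mono (PF.not_not_elim B)) hB')
  have hdia' : diap (.neg B) ∈ y := h _ (hx.mem_of_pf_imp (.pf2 _) hdia)
  exact (hy.neg_mem_iff).1 hdia' (hy.mem_of_pf_imp (PF.boxp_mono (PF.not_not_intro B)) hB)

theorem exists_canonF_not_mem (hB : .boxf B ∉ x) :
    ∃ y, MaxConsistent y ∧ CanonF x y ∧ B ∉ y := by
  have hcon : Consistent (insert (.neg B) {C | .boxf C ∈ x}) := fun hder =>
    hB (hx.boxf_mem_of_derivable (Derivable.of_inconsistent_insert_neg hder))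
  obtain ⟨y, hsub, hy⟩ := exists_maxConsistent_superset hcon
  exact ⟨y, hy, fun C hC => hsub (.inr hC), (hy.neg_mem_iff).1 (hsub (.inl rfl))⟩

/-- The hypotheses `C, □p C` for `□p C ∈ x`, together with `□p B, ¬B`, are consistent, since
otherwise necessitation and Löb's axiom would put `□p B` into `x`. -/
theorem exists_canonP_boxp_mem_not_mem (hB : .boxp B ∉ x) :
    ∃ y, MaxConsistent y ∧ CanonP x y ∧ .boxp B ∈ y ∧ B ∉ y := by
  set S := {C | .boxp C ∈ x}
  have hcon : Consistent (insert (.neg B) (insert (.boxp B) (S ∪ Formula.boxp '' S))) := by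
    intro hder
    have hlob := (Derivable.of_inconsistent_insert_neg hder).imp_intro.boxp_image
    refine hB (hx.mem_of_derivable ?_ (.mp_thm (.lob B) hlob))
    rintro _ ⟨C, hC | ⟨D, hD, rfl⟩, rfl⟩
    · exact hC
    · exact hx.mem_of_pf_imp (PF.boxp_four D) hD
  obtain ⟨y, hsub, hy⟩ := exists_maxConsistent_superset hcon
  refine ⟨y, hy, fun C hC => ⟨hsub (.inr (.inr (.inl hC))), ?_⟩, hsub (.inr (.inl rfl)),
    (hy.neg_mem_iff).1 (hsub (.inl rfl))⟩
  exact hsub (.inr (.inr (.inr (Set.mem_image_of_mem _ hC))))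

/-- By axiom `.2`: if the two sets of `□f`-hypotheses were jointly inconsistent, an interpolant
`D` would give `□f (D → ⊥) ∈ y` and `□f D ∈ z`. -/
theorem exists_canonF_confluent (hy : MaxConsistent y) (hz : MaxConsistent z)
    (h₁ : CanonF x y) (h₂ : CanonF x z) : ∃ w, MaxConsistent w ∧ CanonF y w ∧ CanonF z w := by
  have hcon : Consistent ({C | .boxf C ∈ y} ∪ {C | .boxf C ∈ z}) := by
    intro hder
    obtain ⟨D, hyD, hzD⟩ := hder.exists_of_union
    have hdia : diaf (.imp D Formula.bot) ∈ z :=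
      h₂ _ (hx.mem_of_pf_imp (.dot2f _)
        (hx.diaf_mem_of_canonF hy h₁ (hy.boxf_mem_of_derivable hyD)))
    exact (hz.neg_mem_iff).1 hdia
      (hz.mem_of_pf_imp (PF.boxf_mono (PF.not_imp_bot D)) (hz.boxf_mem_of_derivable hzD))
  obtain ⟨w, hsub, hw⟩ := exists_maxConsistent_superset hcon
  exact ⟨w, hw, fun C hC => hsub (.inl hC), fun C hC => hsub (.inr hC)⟩

end MaxConsistent

/-! ### Labelled subsets of a finite bounded preorder -/

section Label

variable {α : Type*} [Preorder α] {Q a b : Set α} {ρ τ π : α}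

/-- Worlds of a cluster are the pairs `(a, τ)` with `IsLabel Q ρ a τ`, ordered by `a ⊆ b` alone,
so that the cluster is the Boolean algebra `Set Q`. Labelling a chain by its top and any other set
by a top of `Q` keeps labels monotone in `a`, while any `τ' ≥ τ` is reached by adding it to `a`. -/
def IsLabel (Q : Set α) (ρ : α) (a : Set α) (τ : α) : Prop :=
  (IsChain (· ≤ ·) a ∧ τ ∈ upperBounds (insert ρ a) ∧ ∃ σ ∈ insert ρ a, τ ≤ σ) ∨
    (¬ IsChain (· ≤ ·) a ∧ τ ∈ upperBounds Q)

theorem exists_isLabel (hQ : Q.Finite) (hρ : ρ ∈ Q) (hρQ : ρ ∈ lowerBounds Q) {θ : α}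
    (hθ : θ ∈ Q) (hθQ : θ ∈ upperBounds Q) (ha : a ⊆ Q) : ∃ τ ∈ Q, IsLabel Q ρ a τ := by
  by_cases hchain : IsChain (· ≤ ·) a
  · have hchain' : IsChain (· ≤ ·) (insert ρ a) :=
      hchain.insert fun b hb _ => .inl (hρQ (ha hb))
    obtain ⟨σ, hσ⟩ := ((hQ.subset ha).insert ρ).exists_maximal (Set.insert_nonempty ρ a)
    refine ⟨σ, Set.insert_subset hρ ha hσ.prop, .inl ⟨hchain, fun b hb => ?_, σ, hσ.prop, le_rfl⟩⟩
    exact (hchain'.total hb hσ.prop).elim id (hσ.2 hb)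
  · exact ⟨θ, hθ, .inr ⟨hchain, hθQ⟩⟩

theorem IsLabel.le_of_subset (hρ : ρ ∈ Q) (ha : a ⊆ Q) (hτ : τ ∈ Q) (hab : a ⊆ b)
    (h₁ : IsLabel Q ρ a τ) (h₂ : IsLabel Q ρ b π) : τ ≤ π := by
  rcases h₁ with ⟨-, -, σ, hσ, hτσ⟩ | ⟨hna, -⟩
  · rcases h₂ with ⟨-, hπ, -⟩ | ⟨-, hπ⟩
    · exact hτσ.trans (hπ (Set.insert_subset_insert hab hσ))
    · exact hτσ.trans (hπ (Set.insert_subset hρ ha hσ))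
  · rcases h₂ with ⟨hb, -⟩ | ⟨-, hπ⟩
    · exact absurd (hb.mono hab) hna
    · exact hπ hτ

theorem IsLabel.insert_of_le (h : IsLabel Q ρ a τ) {τ' : α} (hle : τ ≤ τ') :
    IsLabel Q ρ (insert τ' a) τ' := by
  rcases h with ⟨hchain, hτ, -⟩ | ⟨hna, hτ⟩
  · have hub : τ' ∈ upperBounds (insert ρ (insert τ' a)) := by
      rintro b (rfl | rfl | hb)
      · exact (hτ (.inl rfl)).trans hle
      · exact le_rfl
      · exact (hτ (.inr hb)).trans hle
    exact .inl ⟨hchain.insert fun b hb _ => .inr (hub (.inr (.inr hb))), hub,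
      τ', .inr (.inl rfl), le_rfl⟩
  · exact .inr ⟨fun hc => hna (hc.mono (Set.subset_insert _ _)), fun b hb => (hτ hb).trans hle⟩

theorem isLabel_empty (Q : Set α) (ρ : α) : IsLabel Q ρ ∅ ρ :=
  .inl ⟨Set.Subsingleton.isChain Set.subsingleton_empty, by simp, ρ, .inl rfl, le_rfl⟩

end Label

/-! ### Frame conditions for `PF` -/

theorem isPFFrame_of {W : Type} {R S : W → W → Prop}
    (hRtrans : ∀ {x y z}, R x y → R y z → R x z) (hRwf : WellFounded (flip R))
    (hSrefl : ∀ x, S x x) (hStrans : ∀ {x y z}, S x y → S y z → S x z)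
    (hSconf : ∀ {x y z}, S x y → S x z → ∃ w, S y w ∧ S z w)
    (hSR : ∀ {x y z}, S x y → R y z → R x z) (hSR' : ∀ {x y z}, S x y → R x z → R y z)
    (hRS : ∀ {x y z}, R x y → S y z → R x z) : IsPFFrame R S := by
  intro A hA
  induction hA with
  | @taut A h =>
    intro V w
    classical
    refine of_decide_eq_true (h (fun B => decide (Sat R S V w B)) ?_ ?_ ?_ ?_) <;>
      intros <;> simp only [Sat] <;> grind
  | kp | kf => exact fun V w h₁ h₂ v hv => h₁ v hv (h₂ v hv)
  | lob A =>
    intro V w h v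
    induction v using hRwf.induction with
    | _ v ih => exact fun hv => h v hv fun u hu => ih u hu (hRtrans hv hu)
  | tf A => exact fun V w h => h w (hSrefl w)
  | fourf A => exact fun V w h v hv u hu => h u (hStrans hv hu)
  | dot2f A =>
    intro V w h v hv hall
    refine h fun y hy hbox => ?_
    obtain ⟨u, hyu, hvu⟩ := hSconf hy hv
    exact hall u hvu (hbox u hyu)
  | pf1 A => exact fun V w h v hv u hu => h u (hSR hv hu)
  | pf2 A => exact fun V w h v hv hall => h fun u hu => hall u (hSR' hv hu)
  | pf3 A => exact fun V w h v hv u hu => h u (hRS hv hu)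
  | mp _ _ ih₁ ih₂ => exact fun V w => ih₁ V w (ih₂ V w)
  | necp _ ih | necf _ ih => exact fun V _ v _ => ih V v

/-! ### The finite model -/

theorem self_mem_subf (A : Formula) : A ∈ subf A := by
  cases A <;> simp [subf]

theorem subf_subset {A B : Formula} (h : B ∈ subf A) : subf B ⊆ subf A := by
  induction A with
  | var n =>
    rw [subf, List.mem_singleton] at h
    exact h ▸ List.Subset.refl _
  | neg A ih | boxp A ih | boxf A ih =>
    rcases List.mem_cons.1 h with rfl | h
    · exact List.Subset.refl _
    · exact fun C hC => by simp [subf, ih h hC]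
  | and A C ihA ihC | or A C ihA ihC | imp A C ihA ihC =>
    rcases List.mem_cons.1 h with rfl | h
    · exact List.Subset.refl _
    · rcases List.mem_append.1 h with h | h
      · exact fun D hD => by simp [subf, ihA h hD]
      · exact fun D hD => by simp [subf, ihC h hD]

@[ext]
structure PhiType where
  carrier : Set Formula

/-- Types are compared by their `□f`-formulas only. -/
instance : Preorder PhiType := Preorder.lift fun τ => {B | .boxf B ∈ τ.carrier}

section Types

variable (A₀ : Formula)

def ty (u : Set Formula) : PhiType := ⟨{B | B ∈ subf A₀ ∧ B ∈ u}⟩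

def phiTypes : Set PhiType := {τ | τ.carrier ⊆ {B | B ∈ subf A₀}}

def realized (z : Set Formula) : Set PhiType := ty A₀ '' {u | MaxConsistent u ∧ CanonF z u}

theorem phiTypes_finite : (phiTypes A₀).Finite :=
  (subf A₀).finite_toSet.finite_subsets.preimage fun _ _ _ _ => PhiType.ext

theorem realized_subset_phiTypes (z : Set Formula) : realized A₀ z ⊆ phiTypes A₀ := by
  rintro _ ⟨u, -, rfl⟩ B hB
  exact hB.1

theorem realized_finite (z : Set Formula) : (realized A₀ z).Finite :=
  (phiTypes_finite A₀).subset (realized_subset_phiTypes A₀ z)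

variable {A₀} {u v z : Set Formula} {B : Formula} {τ : PhiType}

theorem mem_ty_iff (hB : B ∈ subf A₀) : B ∈ (ty A₀ u).carrier ↔ B ∈ u := and_iff_right hB

theorem ty_le_ty (hu : MaxConsistent u) (h : CanonF u v) : ty A₀ u ≤ ty A₀ v :=
  fun _ hB => ⟨hB.1, hu.boxf_mem_of_canonF h hB.2⟩

theorem mem_of_boxf_mem (hτ : τ ∈ realized A₀ z) (hB : .boxf B ∈ τ.carrier) : B ∈ τ.carrier := by
  obtain ⟨u, ⟨hu, -⟩, rfl⟩ := hτ
  exact ⟨subf_subset hB.1 (by simp [subf, self_mem_subf]), hu.mem_of_pf_imp (.tf B) hB.2⟩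

theorem ty_mem_realized (hz : MaxConsistent z) : ty A₀ z ∈ realized A₀ z :=
  ⟨z, ⟨hz, hz.canonF_refl⟩, rfl⟩

theorem ty_mem_lowerBounds_realized (hz : MaxConsistent z) :
    ty A₀ z ∈ lowerBounds (realized A₀ z) := by
  rintro _ ⟨u, ⟨-, hzu⟩, rfl⟩
  exact ty_le_ty hz hzu

theorem exists_mem_upperBounds_realized (hz : MaxConsistent z) :
    ∃ θ ∈ realized A₀ z, θ ∈ upperBounds (realized A₀ z) := by
  suffices ∀ F ⊆ realized A₀ z, F.Finite →
      ∃ w, MaxConsistent w ∧ CanonF z w ∧ ∀ τ ∈ F, τ ≤ ty A₀ w by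
    obtain ⟨w, hw, hzw, hF⟩ := this _ subset_rfl (realized_finite A₀ z)
    exact ⟨ty A₀ w, ⟨w, ⟨hw, hzw⟩, rfl⟩, hF⟩
  intro F hF hfin
  induction F, hfin using Set.Finite.induction_on with
  | empty => exact ⟨z, hz, hz.canonF_refl, by simp⟩
  | @insert τ F _ _ ih =>
    obtain ⟨w, hw, hzw, hFw⟩ := ih ((Set.subset_insert _ _).trans hF)
    obtain ⟨u, ⟨hu, hzu⟩, rfl⟩ := hF (.inl rfl)
    obtain ⟨w', hw', huw', hww'⟩ := hz.exists_canonF_confluent hu hw hzu hzw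
    refine ⟨w', hw', hz.canonF_trans hzu huw', ?_⟩
    rintro σ (rfl | hσ)
    · exact ty_le_ty hu huw'
    · exact (hFw σ hσ).trans (ty_le_ty hw hww')

end Types

section Tree

variable (A₀ : Formula) (x₀ : Set Formula)

/-- `y` is reached from `z` by moving `≼`-up to a realization `u` of `τ` and then `⊏`-down to
a Löb witness for `□p B`. -/
def IsChild (z : Set Formula) (τ : PhiType) (B : Formula) (y : Set Formula) : Prop :=
  MaxConsistent y ∧ .boxp B ∈ y ∧ B ∉ y ∧
    ∃ u, MaxConsistent u ∧ CanonF z u ∧ ty A₀ u = τ ∧ CanonP u y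

/-- A node of the tree records the choices `(τ, B)` made on the way down from `x₀`, most recent
first. -/
noncomputable def base : List (PhiType × Formula) → Set Formula
  | [] => x₀
  | (τ, B) :: p => Classical.epsilon (IsChild A₀ (base p) τ B)

def IsNode : List (PhiType × Formula) → Prop
  | [] => True
  | (τ, B) :: p => IsNode p ∧ τ ∈ realized A₀ (base A₀ x₀ p) ∧ .boxp B ∈ subf A₀ ∧
      .boxp B ∉ τ.carrier

def boxpArgs : Set Formula := {B | .boxp B ∈ subf A₀}

theorem boxpArgs_finite : (boxpArgs A₀).Finite :=
  (subf A₀).finite_toSet.preimage fun _ _ _ _ h => Formula.boxp.inj h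

variable {A₀ x₀} {z : Set Formula} {τ : PhiType} {B C : Formula} {p : List (PhiType × Formula)}

theorem exists_isChild (hτ : τ ∈ realized A₀ z) (hB : .boxp B ∈ subf A₀)
    (hBτ : .boxp B ∉ τ.carrier) : ∃ y, IsChild A₀ z τ B y := by
  obtain ⟨u, ⟨hu, hzu⟩, rfl⟩ := hτ
  obtain ⟨y, hy, huy, hBy, hnB⟩ := hu.exists_canonP_boxp_mem_not_mem fun h => hBτ ⟨hB, h⟩
  exact ⟨y, hy, hBy, hnB, u, hu, hzu, rfl, huy⟩

theorem IsNode.tail {e : PhiType × Formula} (h : IsNode A₀ x₀ (e :: p)) : IsNode A₀ x₀ p := h.1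

theorem isChild_base (h : IsNode A₀ x₀ ((τ, B) :: p)) :
    IsChild A₀ (base A₀ x₀ p) τ B (base A₀ x₀ ((τ, B) :: p)) :=
  Classical.epsilon_spec (exists_isChild h.2.1 h.2.2.1 h.2.2.2)

theorem maxConsistent_base (hx₀ : MaxConsistent x₀) :
    ∀ {p}, IsNode A₀ x₀ p → MaxConsistent (base A₀ x₀ p)
  | [], _ => hx₀
  | (_, _) :: _, h => (isChild_base h).1

theorem boxp_mem_base_cons (hx₀ : MaxConsistent x₀) (h : IsNode A₀ x₀ ((τ, B) :: p))
    (hC : .boxp C ∈ base A₀ x₀ p) :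
    .boxp C ∈ base A₀ x₀ ((τ, B) :: p) ∧ .boxf C ∈ base A₀ x₀ ((τ, B) :: p) := by
  obtain ⟨-, -, -, u, hu, hzu, -, huy⟩ := isChild_base h
  have hCu := ((maxConsistent_base hx₀ h.1).boxp_mem_iff_of_canonF hu hzu).1 hC
  exact ⟨(huy C hCu).2, (huy _ (hu.mem_of_pf_imp (.pf3 C) hCu)).1⟩

theorem boxf_mem_base_append (hx₀ : MaxConsistent x₀) {s : List (PhiType × Formula)}
    (h : IsNode A₀ x₀ (s ++ p)) (hs : s ≠ []) (hC : .boxp C ∈ base A₀ x₀ p) :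
    .boxf C ∈ base A₀ x₀ (s ++ p) := by
  suffices ∀ s, IsNode A₀ x₀ (s ++ p) →
      .boxp C ∈ base A₀ x₀ (s ++ p) ∧ (s ≠ [] → .boxf C ∈ base A₀ x₀ (s ++ p)) from
    (this s h).2 hs
  intro s
  induction s with
  | nil => exact fun _ => ⟨hC, fun h => absurd rfl h⟩
  | cons e s ih =>
    intro h
    obtain ⟨τ, B⟩ := e
    have := boxp_mem_base_cons hx₀ h (ih h.tail).1
    exact ⟨this.1, fun _ => this.2⟩

theorem boxp_not_mem_base (hx₀ : MaxConsistent x₀) (h : IsNode A₀ x₀ ((τ, B) :: p)) :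
    .boxp B ∉ base A₀ x₀ p := by
  obtain ⟨-, -, -, u, hu, hzu, rfl, -⟩ := isChild_base h
  exact fun hBz =>
    h.2.2.2 ⟨h.2.2.1, ((maxConsistent_base hx₀ h.1).boxp_mem_iff_of_canonF hu hzu).1 hBz⟩

/-- Each step down the tree adds a new `□p`-subformula of `A₀` to the base. -/
theorem length_le_ncard (hx₀ : MaxConsistent x₀) (h : IsNode A₀ x₀ p) :
    p.length ≤ {B | B ∈ boxpArgs A₀ ∧ .boxp B ∈ base A₀ x₀ p}.ncard := by
  induction p with
  | nil => exact Nat.zero_le _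
  | cons e p ih =>
    obtain ⟨τ, B⟩ := e
    have hsub : {C | C ∈ boxpArgs A₀ ∧ .boxp C ∈ base A₀ x₀ p} ⊆
        {C | C ∈ boxpArgs A₀ ∧ .boxp C ∈ base A₀ x₀ ((τ, B) :: p)} :=
      fun C hC => ⟨hC.1, (boxp_mem_base_cons hx₀ h hC.2).1⟩
    refine (Nat.succ_le_succ (ih h.tail)).trans (Set.ncard_lt_ncard ?_
      ((boxpArgs_finite A₀).subset fun _ hC => hC.1))
    exact (Set.ssubset_iff_of_subset hsub).2
      ⟨B, ⟨h.2.2.1, (isChild_base h).2.1⟩, fun hB => boxp_not_mem_base hx₀ h hB.2⟩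

theorem IsNode.mem_prod : ∀ {p}, IsNode A₀ x₀ p → ∀ e ∈ p, e ∈ phiTypes A₀ ×ˢ boxpArgs A₀
  | [], _ => by simp
  | (_, _) :: _, ⟨hp, hτ, hB, _⟩ => by
    intro e he
    rcases List.mem_cons.1 he with rfl | he
    · exact ⟨realized_subset_phiTypes A₀ _ hτ, hB⟩
    · exact hp.mem_prod e he

theorem setOf_isNode_finite (hx₀ : MaxConsistent x₀) : {p | IsNode A₀ x₀ p}.Finite := by
  let E := phiTypes A₀ ×ˢ boxpArgs A₀
  have : Finite E := ((phiTypes_finite A₀).prod (boxpArgs_finite A₀)).to_subtype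
  refine ((List.finite_length_le E (boxpArgs A₀).ncard).image (List.map Subtype.val)).subset
    fun p hp => ?_
  lift p to List E using IsNode.mem_prod hp
  refine ⟨p, ?_, rfl⟩
  simpa using (length_le_ncard hx₀ hp).trans
    (Set.ncard_le_ncard (fun _ hC => hC.1) (boxpArgs_finite A₀))

end Tree

@[ext]
structure World (A₀ : Formula) (x₀ : Set Formula) where
  node : List (PhiType × Formula)
  isNode : IsNode A₀ x₀ node
  types : Set PhiType
  types_subset : types ⊆ realized A₀ (base A₀ x₀ node)
  label : PhiType
  label_mem : label ∈ realized A₀ (base A₀ x₀ node)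
  isLabel : IsLabel (realized A₀ (base A₀ x₀ node)) (ty A₀ (base A₀ x₀ node)) types label

namespace World

variable {A₀ : Formula} {x₀ : Set Formula}

def R (w v : World A₀ x₀) : Prop := ∃ s ≠ [], v.node = s ++ w.node

def S (w v : World A₀ x₀) : Prop := w.node = v.node ∧ w.types ⊆ v.types

def val (w : World A₀ x₀) (n : ℕ) : Prop := .var n ∈ w.label.carrier

theorem R_trans {w v u : World A₀ x₀} : R w v → R v u → R w u := by
  rintro ⟨s, hs, hv⟩ ⟨t, -, hu⟩
  exact ⟨t ++ s, by simp [hs], by rw [hu, hv, List.append_assoc]⟩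

theorem R_irrefl (w : World A₀ x₀) : ¬ R w w := by
  rintro ⟨s, hs, h⟩
  exact hs (List.append_cancel_right (cs := []) h.symm)

theorem nice : Nice (R (A₀ := A₀) (x₀ := x₀)) S :=
  fun _ _ _ ⟨s, hs, h⟩ hS => ⟨s, hs, hS.1.trans h⟩

variable (hx₀ : MaxConsistent x₀) {p : List (PhiType × Formula)}
include hx₀

/-- The `≼`-root of the cluster at a node. -/
noncomputable def bot (h : IsNode A₀ x₀ p) : World A₀ x₀ where
  node := p
  isNode := h
  types := ∅
  types_subset := Set.empty_subset _
  label := ty A₀ (base A₀ x₀ p)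
  label_mem := ty_mem_realized (maxConsistent_base hx₀ h)
  isLabel := isLabel_empty _ _

theorem exists_types_eq (h : IsNode A₀ x₀ p) {a : Set PhiType}
    (ha : a ⊆ realized A₀ (base A₀ x₀ p)) : ∃ w : World A₀ x₀, w.node = p ∧ w.types = a := by
  have hz := maxConsistent_base hx₀ h
  obtain ⟨θ, hθ, hθub⟩ := exists_mem_upperBounds_realized (A₀ := A₀) hz
  obtain ⟨τ, hτ, hlabel⟩ := exists_isLabel (realized_finite A₀ _) (ty_mem_realized hz)
    (ty_mem_lowerBounds_realized hz) hθ hθub ha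
  exact ⟨⟨p, h, a, ha, τ, hτ, hlabel⟩, rfl, rfl⟩

theorem finite : Finite (World A₀ x₀) := by
  let T := {p | IsNode A₀ x₀ p} ×ˢ ((phiTypes A₀).powerset ×ˢ phiTypes A₀)
  have : Finite T := ((setOf_isNode_finite hx₀).prod
    ((phiTypes_finite A₀).powerset.prod (phiTypes_finite A₀))).to_subtype
  refine Finite.of_injective (β := T) (fun w => ⟨(w.node, w.types, w.label), w.isNode,
    fun _ hτ => realized_subset_phiTypes A₀ _ (w.types_subset hτ),
    realized_subset_phiTypes A₀ _ w.label_mem⟩) fun w v h => ?_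
  have h' := congrArg Subtype.val h
  simp only [Prod.mk.injEq] at h'
  exact World.ext h'.1 h'.2.1 h'.2.2

theorem isPFFrame : IsPFFrame (R (A₀ := A₀) (x₀ := x₀)) S := by
  have := finite (A₀ := A₀) hx₀
  have : IsTrans (World A₀ x₀) (flip R) := ⟨fun _ _ _ h₁ h₂ => R_trans h₂ h₁⟩
  have : Std.Irrefl (flip (R (A₀ := A₀) (x₀ := x₀))) := ⟨R_irrefl⟩
  refine isPFFrame_of R_trans (Finite.wellFounded_of_trans_of_irrefl _)
    (fun w => ⟨rfl, subset_rfl⟩) (fun h₁ h₂ => ⟨h₁.1.trans h₂.1, h₁.2.trans h₂.2⟩) ?_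
    (fun h₁ ⟨s, hs, h⟩ => ⟨s, hs, h₁.1 ▸ h⟩) (fun h₁ ⟨s, hs, h⟩ => ⟨s, hs, h₁.1 ▸ h⟩)
    (fun ⟨s, hs, h⟩ h₂ => ⟨s, hs, h₂.1 ▸ h⟩)
  intro w v u hv hu
  obtain ⟨t, ht, hts⟩ := exists_types_eq hx₀ w.isNode (a := v.types ∪ u.types)
    (Set.union_subset (hv.1 ▸ v.types_subset) (hu.1 ▸ u.types_subset))
  exact ⟨t, ⟨hv.1.symm.trans ht.symm, hts ▸ Set.subset_union_left⟩,
    ⟨hu.1.symm.trans ht.symm, hts ▸ Set.subset_union_right⟩⟩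

theorem mem_cluster_iff {w v : World A₀ x₀} : v ∈ cluster S w ↔ v.node = w.node := by
  refine ⟨fun h => ?_, fun h => ?_⟩
  · induction h with
    | single h => exact h.elim (fun h => h.1.symm) (fun h => h.1)
    | tail _ h ih => exact h.elim (fun h => h.1.symm.trans ih) (fun h => h.1.trans ih)
  · exact .tail (b := bot hx₀ w.isNode) (.single (.inr ⟨rfl, Set.empty_subset _⟩))
      (.inl ⟨h.symm, Set.empty_subset _⟩)

theorem bot_S {w : World A₀ x₀} (h : IsNode A₀ x₀ p) (hw : w.node = p) : S (bot hx₀ h) w :=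
  ⟨hw.symm, Set.empty_subset _⟩

noncomputable def root : World A₀ x₀ := bot hx₀ (p := []) trivial

theorem root_cluster_or_R (w : World A₀ x₀) :
    cluster S (root hx₀) = cluster S w ∨ R (root hx₀) w := by
  by_cases hw : w.node = []
  · left
    ext v
    rw [mem_cluster_iff hx₀, mem_cluster_iff hx₀, hw]
    rfl
  · exact .inr ⟨w.node, hw, (List.append_nil _).symm⟩

theorem rooted : Rooted (R (A₀ := A₀) (x₀ := x₀)) S :=
  ⟨⟨root hx₀, root_cluster_or_R hx₀⟩, fun w => ⟨bot hx₀ w.isNode, (mem_cluster_iff hx₀).2 rfl,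
    fun _ hv => bot_S hx₀ w.isNode ((mem_cluster_iff hx₀).1 hv)⟩⟩

/-- The cluster of `w` is ordered as the powerset of the types realized above its base. -/
theorem clusterPBA (w : World A₀ x₀) : ClusterPBA S w := by
  let Q := realized A₀ (base A₀ x₀ w.node)
  refine ⟨Set Q, inferInstance, fun v => Subtype.val ⁻¹' v.1.types, fun a => ?_, fun v v' => ?_⟩
  · obtain ⟨u, hu, hua⟩ := exists_types_eq hx₀ w.isNode (Subtype.coe_image_subset Q a)
    refine ⟨⟨u, (mem_cluster_iff hx₀).2 hu⟩, ?_⟩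
    simp only [hua, Set.preimage_image_eq _ Subtype.val_injective]
  · have hv := (mem_cluster_iff hx₀).1 v.2
    have hv' := (mem_cluster_iff hx₀).1 v'.2
    refine ⟨fun h => Set.preimage_mono h.2, fun h => ⟨hv.trans hv'.symm, fun τ hτ => ?_⟩⟩
    have hτQ : τ ∈ realized A₀ (base A₀ x₀ w.node) := hv ▸ v.1.types_subset hτ
    exact h (show (⟨τ, hτQ⟩ : Q) ∈ Subtype.val ⁻¹' v.1.types from hτ)

theorem sat_boxf_iff {B : Formula} (hB : .boxf B ∈ subf A₀)
    (ih : ∀ v : World A₀ x₀, Sat R S val v B ↔ B ∈ v.label.carrier) (w : World A₀ x₀) :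
    Sat R S val w (.boxf B) ↔ .boxf B ∈ w.label.carrier := by
  refine ⟨fun hsat => ?_, fun hmem v hv => ?_⟩
  · by_contra hnB
    obtain ⟨u, ⟨hu, hzu⟩, hτ⟩ := w.label_mem
    rw [← hτ, mem_ty_iff hB] at hnB
    obtain ⟨y, hy, huy, hBy⟩ := hu.exists_canonF_not_mem hnB
    have hyQ : ty A₀ y ∈ realized A₀ (base A₀ x₀ w.node) :=
      ⟨y, ⟨hy, (maxConsistent_base hx₀ w.isNode).canonF_trans hzu huy⟩, rfl⟩
    let v : World A₀ x₀ := ⟨w.node, w.isNode, insert (ty A₀ y) w.types,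
      Set.insert_subset hyQ w.types_subset, ty A₀ y, hyQ,
      w.isLabel.insert_of_le (hτ ▸ ty_le_ty hu huy)⟩
    exact hBy ((ih v).1 (hsat v ⟨rfl, Set.subset_insert _ _⟩)).2
  · obtain ⟨hnode, hsub⟩ := hv
    have hvl := v.isLabel
    rw [← hnode] at hvl
    have hle := w.isLabel.le_of_subset (ty_mem_realized (maxConsistent_base hx₀ w.isNode))
      w.types_subset w.label_mem hsub hvl
    exact (ih v).2 (mem_of_boxf_mem v.label_mem (hle hmem))

theorem sat_boxp_iff {B : Formula} (hB : .boxp B ∈ subf A₀)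
    (ih : ∀ v : World A₀ x₀, Sat R S val v B ↔ B ∈ v.label.carrier) (w : World A₀ x₀) :
    Sat R S val w (.boxp B) ↔ .boxp B ∈ w.label.carrier := by
  refine ⟨fun hsat => ?_, fun hmem v hv => ?_⟩
  · by_contra hnB
    have hnode : IsNode A₀ x₀ ((w.label, B) :: w.node) := ⟨w.isNode, w.label_mem, hB, hnB⟩
    exact (isChild_base hnode).2.2.1
      ((ih _).1 (hsat (bot hx₀ hnode) ⟨[(w.label, B)], by simp, rfl⟩)).2
  · obtain ⟨s, hs, hnode⟩ := hv
    obtain ⟨u, ⟨hu, hzu⟩, hτ⟩ := w.label_mem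
    rw [← hτ, mem_ty_iff hB] at hmem
    have hBz := ((maxConsistent_base hx₀ w.isNode).boxp_mem_iff_of_canonF hu hzu).2 hmem
    have hBv := boxf_mem_base_append hx₀ (hnode ▸ v.isNode) hs hBz
    obtain ⟨u', ⟨-, hzu'⟩, hτ'⟩ := v.label_mem
    rw [hnode] at hzu'
    rw [ih, ← hτ']
    exact ⟨subf_subset hB (by simp [subf, self_mem_subf]), hzu' B hBv⟩

theorem sat_iff {B : Formula} (hB : B ∈ subf A₀) (w : World A₀ x₀) :
    Sat R S val w B ↔ B ∈ w.label.carrier := by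
  induction B generalizing w with
  | var n => exact Iff.rfl
  | neg B ih =>
    obtain ⟨u, ⟨hu, -⟩, hτ⟩ := w.label_mem
    have hB' : B ∈ subf A₀ := subf_subset hB (by simp [subf, self_mem_subf])
    simp only [Sat]
    rw [ih hB' w, ← hτ, mem_ty_iff hB, mem_ty_iff hB', hu.neg_mem_iff]
  | and B C ihB ihC | or B C ihB ihC | imp B C ihB ihC =>
    obtain ⟨u, ⟨hu, -⟩, hτ⟩ := w.label_mem
    have hB' : B ∈ subf A₀ := subf_subset hB (by simp [subf, self_mem_subf])
    have hC' : C ∈ subf A₀ := subf_subset hB (by simp [subf, self_mem_subf])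
    simp only [Sat]
    rw [ihB hB' w, ihC hC' w, ← hτ, mem_ty_iff hB, mem_ty_iff hB', mem_ty_iff hC']
    first
      | exact (hu.and_mem_iff).symm
      | exact (hu.or_mem_iff).symm
      | exact (hu.imp_mem_iff).symm
  | boxp B ih =>
    exact sat_boxp_iff hx₀ hB (ih (subf_subset hB (by simp [subf, self_mem_subf]))) w
  | boxf B ih =>
    exact sat_boxf_iff hx₀ hB (ih (subf_subset hB (by simp [subf, self_mem_subf]))) w

end World

theorem pf_of_forall_sat_root {A : Formula}
    (h : ∀ (W : Type) (R S : W → W → Prop), Nonempty W → Finite W → IsPFFrame R S →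
       Nice R S → Rooted R S → (∀ x : W, ClusterPBA S x) →
       ∀ (V : W → ℕ → Prop) (r : W),
         (∀ x : W, cluster S r = cluster S x ∨ R r x) →
         (∀ z ∈ cluster S r, S r z) →
         Sat R S V r A) : PF A := by
  by_contra hA
  have hcon : Consistent (insert (.neg A) ∅) := fun hder =>
    hA (Derivable.of_inconsistent_insert_neg hder).pf_of_empty
  obtain ⟨x₀, hsub, hx₀⟩ := exists_maxConsistent_superset hcon
  have hroot := h (World A x₀) World.R World.S ⟨World.root hx₀⟩ (World.finite hx₀)
    (World.isPFFrame hx₀) World.nice (World.rooted hx₀) (World.clusterPBA hx₀) World.val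
    (World.root hx₀) (World.root_cluster_or_R hx₀)
    fun _ hv => World.bot_S hx₀ _ ((World.mem_cluster_iff hx₀).1 hv)
  rw [World.sat_iff hx₀ (self_mem_subf A)] at hroot
  exact (hx₀.neg_mem_iff).1 (hsub (.inl rfl)) hroot.2

theorem statement_7 (A : Formula) :
    [PF A,
     ∀ (W : Type) (R S : W → W → Prop), Nonempty W → IsPFFrame R S → ValidOn R S A,
     ∀ (W : Type) (R S : W → W → Prop), Nonempty W → Finite W → IsPFFrame R S →
       Nice R S → Rooted R S → (∀ x : W, ClusterPBA S x) → ValidOn R S A,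
     ∀ (W : Type) (R S : W → W → Prop), Nonempty W → Finite W → IsPFFrame R S →
       Nice R S → Rooted R S → (∀ x : W, ClusterPBA S x) →
       ∀ (V : W → ℕ → Prop) (r : W),
         (∀ x : W, cluster S r = cluster S x ∨ R r x) →
         (∀ z ∈ cluster S r, S r z) →
         Sat R S V r A].TFAE := by
  tfae_have 1 → 2 := fun h _ _ _ _ hF => hF A h
  tfae_have 2 → 3 := fun h W R S hne _ hF _ _ _ => h W R S hne hF
  tfae_have 3 → 4 := fun h W R S hne hfin hF hn hr hp V r _ _ => h W R S hne hfin hF hn hr hp V r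
  tfae_have 4 → 1 := pf_of_forall_sat_root
  tfae_finish

end PFPaper
end

section
/- For any formula A of the bimodal language L_pf, PF proves the equivalence (□p A → □f A) ↔ □f(□p A → A). -/
namespace PFPaper

section Statement10Aux

lemma PF.mono_f {A B : Formula} (h : PF (.imp A B)) : PF (.imp (.boxf A) (.boxf B)) :=
  PF.mp (PF.kf A B) (PF.necf h)

lemma PF.mono_p {A B : Formula} (h : PF (.imp A B)) : PF (.imp (.boxp A) (.boxp B)) :=
  PF.mp (PF.kp A B) (PF.necp h)

lemma taut_trans (P Q R : Formula) :
    Taut (.imp (.imp P Q) (.imp (.imp Q R) (.imp P R))) := by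
  intro f hn ha ho hi
  simp only [hi, hn]
  cases f P <;> cases f Q <;> cases f R <;> rfl

lemma PF.trans {A B C : Formula} (h1 : PF (.imp A B)) (h2 : PF (.imp B C)) :
    PF (.imp A C) :=
  PF.mp (PF.mp (PF.taut (taut_trans A B C)) h1) h2

lemma taut_k1 (P Q : Formula) : Taut (.imp Q (.imp P Q)) := by
  intro f hn ha ho hi
  simp only [hi, hn]
  cases f P <;> cases f Q <;> rfl

lemma taut_negimp (P Q : Formula) : Taut (.imp (.neg P) (.imp P Q)) := by
  intro f hn ha ho hi
  simp only [hi, hn]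
  cases f P <;> cases f Q <;> rfl

lemma taut_contra (P Q : Formula) : Taut (.imp (.imp P Q) (.imp (.neg Q) (.neg P))) := by
  intro f hn ha ho hi
  simp only [hi, hn]
  cases f P <;> cases f Q <;> rfl

lemma PF.contra {A B : Formula} (h : PF (.imp A B)) : PF (.imp (.neg B) (.neg A)) :=
  PF.mp (PF.taut (taut_contra A B)) h

lemma taut_dni (P : Formula) : Taut (.imp P (.neg (.neg P))) := by
  intro f hn ha ho hi
  simp only [hi, hn]
  cases f P <;> rfl

lemma taut_dne (P : Formula) : Taut (.imp (.neg (.neg P)) P) := by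
  intro f hn ha ho hi
  simp only [hi, hn]
  cases f P <;> rfl

lemma taut_comb (P Q R : Formula) :
    Taut (.imp (.imp Q R) (.imp (.imp (.neg P) R) (.imp (.imp P Q) R))) := by
  intro f hn ha ho hi
  simp only [hi, hn]
  cases f P <;> cases f Q <;> cases f R <;> rfl

lemma taut_dir2 (X Y Z W : Formula) :
    Taut (.imp (.imp X (.imp Y Z)) (.imp (.imp W Y) (.imp X (.imp W Z)))) := by
  intro f hn ha ho hi
  simp only [hi, hn]
  cases f X <;> cases f Y <;> cases f Z <;> cases f W <;> rfl

lemma taut_and (P Q : Formula) : Taut (.imp P (.imp Q (.and P Q))) := by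
  intro f hn ha ho hi
  simp only [hi, hn, ha]
  cases f P <;> cases f Q <;> rfl

lemma PF.and_intro_s10 {A B : Formula} (h1 : PF A) (h2 : PF B) : PF (.and A B) :=
  PF.mp (PF.mp (PF.taut (taut_and A B)) h1) h2

end Statement10Aux

theorem statement_10 (A : Formula) :
    PF (iffF (.imp (.boxp A) (.boxf A)) (.boxf (.imp (.boxp A) A))) := by
  -- Direction ←: □f(□pA→A) → (□pA → □fA)
  have hback : PF (.imp (.boxf (.imp (.boxp A) A)) (.imp (.boxp A) (.boxf A))) :=
    PF.mp (PF.mp (PF.taut (taut_dir2 (.boxf (.imp (.boxp A) A))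
      (.boxf (.boxp A)) (.boxf A) (.boxp A))) (PF.kf (.boxp A) A)) (PF.pf1 A)
  -- hA : □fA → □f(□pA→A)
  have hA : PF (.imp (.boxf A) (.boxf (.imp (.boxp A) A))) :=
    PF.mono_f (PF.taut (taut_k1 (.boxp A) A))
  -- ¬□pA → □f¬□pA:
  have e1 : PF (.imp (.neg (.boxp A)) (.neg (.boxp (.neg (.neg A))))) :=
    PF.contra (PF.mono_p (PF.taut (taut_dne A)))
  have e2 : PF (.imp (.neg (.boxp (.neg (.neg A)))) (.boxf (.neg (.boxp (.neg (.neg A)))))) :=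
    PF.pf2 (.neg A)
  have e3 : PF (.imp (.boxf (.neg (.boxp (.neg (.neg A))))) (.boxf (.neg (.boxp A)))) :=
    PF.mono_f (PF.contra (PF.mono_p (PF.taut (taut_dni A))))
  have hnbox : PF (.imp (.neg (.boxp A)) (.boxf (.neg (.boxp A)))) :=
    PF.trans e1 (PF.trans e2 e3)
  -- hNeg : ¬□pA → □f(□pA→A)
  have hNeg : PF (.imp (.neg (.boxp A)) (.boxf (.imp (.boxp A) A))) :=
    PF.trans hnbox (PF.mono_f (PF.taut (taut_negimp (.boxp A) A)))
  -- Direction →: (□pA→□fA) → □f(□pA→A)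
  have hfwd : PF (.imp (.imp (.boxp A) (.boxf A)) (.boxf (.imp (.boxp A) A))) :=
    PF.mp (PF.mp (PF.taut (taut_comb (.boxp A) (.boxf A)
      (.boxf (.imp (.boxp A) A)))) hA) hNeg
  exact PF.and_intro_s10 hfwd hback

end PFPaper
end
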